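/- Let X be a metrizable space and p ∈ X. If the topological fundamental group π₁(X,p) is discrete (i.e., the trivial class is open), then X is semilocally simply connected at p. -/

import Mathlib

open Topology Filter unitInterval

instance ZerothHomotopy.instTopologicalSpaceQuot (X : Type*) [TopologicalSpace X] :
    TopologicalSpace (ZerothHomotopy X) :=
  inferInstanceAs (TopologicalSpace (Quotient _))

/-- `X` is semilocally simply connected at `p`: some open neighborhood `U` of `p` is such
that every loop at `p` contained in `U` is null-homotopic (rel endpoints) in `X`. -/
def SemilocallySimplyConnectedAt (X : Type*) [TopologicalSpace X] (p : X) : Prop :=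
  ∃ U : Set X, IsOpen U ∧ p ∈ U ∧
    ∀ γ : Path p p, (∀ t, γ t ∈ U) → γ.Homotopic (Path.refl p)

/-!
A neighborhood of the constant loop in the compact-open topology contains all loops lying in
some open neighborhood `U` of `p`. If `π₁(X, p)` is discrete, the path component of the constant
loop in the loop space is such a neighborhood, so every loop in `U` is joined to the constant loop
by a path of loops, which is a homotopy rel endpoints.
-/

theorem Path.Homotopic.of_joined {X : Type*} [TopologicalSpace X] {x₀ x₁ : X}
    {γ₀ γ₁ : Path x₀ x₁} (h : Joined γ₀ γ₁) : γ₀.Homotopic γ₁ := by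
  obtain ⟨Γ⟩ := h
  refine ⟨{ toFun := fun st => Γ st.1 st.2
            continuous_toFun := Continuous.eval (Γ.continuous.comp continuous_fst) continuous_snd
            map_zero_left := fun t => by simp
            map_one_left := fun t => by simp
            prop' := fun s t ht => ?_ }⟩
  rcases ht with rfl | rfl <;> simp

theorem Path.exists_isOpen_forall_mem_of_mem_nhds_refl {X : Type*} [TopologicalSpace X] {x : X}
    {s : Set (Path x x)} (hs : s ∈ 𝓝 (Path.refl x)) :
    ∃ U : Set X, IsOpen U ∧ x ∈ U ∧ ∀ γ : Path x x, (∀ t, γ t ∈ U) → γ ∈ s := by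
  rw [nhds_induced] at hs
  obtain ⟨S, hS, hSs⟩ := hs
  obtain ⟨⟨K, U⟩, ⟨-, hxU, hU⟩, hKU⟩ :=
    ((nhds_basis_opens x).nhds_continuousMapConst (X := I)).mem_iff.1 hS
  exact ⟨U, hU, hxU, fun γ hγ => hSs (hKU fun t _ => hγ t)⟩

theorem ZerothHomotopy.isOpen_setOf_joined {Y : Type*} [TopologicalSpace Y]
    [DiscreteTopology (ZerothHomotopy Y)] (y : Y) : IsOpen {z | Joined z y} := by
  have hmk : Continuous (ZerothHomotopy.mk : Y → ZerothHomotopy Y) :=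
    ZerothHomotopy.isQuotientMap_mk.continuous
  convert (isOpen_discrete {ZerothHomotopy.mk y}).preimage hmk using 1
  ext z
  exact (Quotient.eq (r := pathSetoid Y)).symm

theorem stmt4_general {X : Type*} [TopologicalSpace X] (p : X)
    (h : DiscreteTopology (ZerothHomotopy (Path p p))) :
    SemilocallySimplyConnectedAt X p := by
  obtain ⟨U, hU, hpU, hloops⟩ := Path.exists_isOpen_forall_mem_of_mem_nhds_refl
    ((ZerothHomotopy.isOpen_setOf_joined (Path.refl p)).mem_nhds (Joined.refl _))
  exact ⟨U, hU, hpU, fun γ hγ => Path.Homotopic.of_joined (hloops γ hγ)⟩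

theorem stmt4 {X : Type*} [TopologicalSpace X] [TopologicalSpace.MetrizableSpace X] (p : X)
    (h : DiscreteTopology (ZerothHomotopy (Path p p))) :
    SemilocallySimplyConnectedAt X p :=
  stmt4_general p h
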